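/- For any admissible configuration X and any word α with L(α) > H(α) + 1, we have ε_X(α) = 0. -/

import Mathlib

open scoped Classical

/-- A configuration of the infinite-bin model: number of balls in each bin. -/
abbrev Config := ℤ → ℕ∞

/-- Admissible configuration: nonempty bins form a semi-infinite interval, and
every bin to the left of an infinite bin is infinite. -/
def IsAdmissible (X : Config) : Prop :=
  (∃ m : ℤ, ∀ j : ℤ, X j ≠ 0 ↔ j ≤ m) ∧ ∀ j : ℤ, X j = ⊤ → X (j - 1) = ⊤

/-- N(X,k): number of balls in bins of index ≥ k. -/
noncomputable def Nballs (X : Config) (k : ℤ) : ℕ∞ := ∑' j : {j : ℤ // k ≤ j}, X j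

/-- B(X,ξ): leftmost position such that there are fewer than ξ balls to its right. -/
noncomputable def Bpos (X : Config) (ξ : ℕ) : ℤ := sInf {j : ℤ | Nballs X j < (ξ : ℕ∞)}

/-- The move of type ξ: add one ball in the bin of index B(X,ξ). -/
noncomputable def Phi (ξ : ℕ) (X : Config) : Config :=
  fun j => X j + (if j = Bpos X ξ then 1 else 0)

/-- The move of type ξ ∈ ℕ ∪ {∞}, with Φ_∞ = id. -/
noncomputable def PhiE (ξ : ℕ∞) (X : Config) : Config :=
  if ξ = ⊤ then X else Phi ξ.toNat X

/-- The shift operator τ. -/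
def shift (X : Config) : Config := fun j => X (j - 1)

/-- Configuration obtained after applying successively the moves listed in α. -/
noncomputable def applyWord (X : Config) (α : List ℕ) : Config :=
  α.foldl (fun Y a => Phi a Y) X

/-- d_X(α): displacement of the front after performing the word α. -/
noncomputable def dX (X : Config) (α : List ℕ) : ℤ :=
  Bpos (applyWord X α) 1 - Bpos X 1

/-- α ∈ P_X : α is nonempty and its last move places a ball in a previously empty bin. -/
def inP (X : Config) (α : List ℕ) : Prop :=
  ∃ β a, α = β ++ [a] ∧ applyWord X β (Bpos (applyWord X β) a) = 0

/-- ε_X(α) = 1_{α ∈ P_X} - 1_{ϖα ∈ P_X}. -/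
noncomputable def eps (X : Config) (α : List ℕ) : ℤ :=
  (if inP X α then 1 else 0) - (if inP X α.tail then 1 else 0)

/-!
Write `α = a :: (q ++ t)` with `t` nonempty and every nonempty prefix of `t` of sum less than twice
its length: starting from `α.tail`, whose sum is less than twice its length, pass to a shorter
suffix whenever some prefix is too heavy. Then `t[i] ≤ i + 1`. The configurations reached after
`a :: q` and after `q` both have a front, and the `i`-th move of `t` has type at most one more than
the number of balls already placed above the fronts, so it lands at or above the front, at the
same offset in both runs. The runs therefore coincide above their fronts, and the last move of `t`
fills an empty bin in one run exactly when it does in the other.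
-/

open Filter

theorem ENat.summable {ι : Type*} (f : ι → ℕ∞) : Summable f :=
  (hasSum_of_isLUB _ isLUB_iSup).summable

section Nballs

variable {X Y Y' : Config} {f f' k : ℤ}

theorem nballs_eq_tsum_nat (X : Config) (k : ℤ) : Nballs X k = ∑' n : ℕ, X (k + n) :=
  let e : ℕ ≃ {j : ℤ // k ≤ j} :=
    { toFun := fun n => ⟨k + n, by omega⟩
      invFun := fun j => (j.1 - k).toNat
      left_inv := fun n => by simp
      right_inv := fun j => by ext; simp only; omega }
  (e.tsum_eq fun j => X j).symm

theorem nballs_eq_add (X : Config) (k : ℤ) : Nballs X k = X k + Nballs X (k + 1) := by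
  rw [nballs_eq_tsum_nat, nballs_eq_tsum_nat, tsum_eq_zero_add' (ENat.summable _)]
  simp only [Nat.cast_zero, add_zero, Nat.cast_succ, add_assoc, add_comm (1 : ℤ)]

theorem nballs_antitone (X : Config) : Antitone (Nballs X) :=
  antitone_int_of_succ_le fun k => (nballs_eq_add X k).symm ▸ le_add_self

theorem nballs_eq_zero (h : ∀ j, k ≤ j → X j = 0) : Nballs X k = 0 := by
  rw [nballs_eq_tsum_nat]
  exact (tsum_congr fun n => h _ (by omega)).trans tsum_zero

theorem nballs_add_nat_congr (h : ∀ n : ℕ, Y (f + n) = Y' (f' + n)) (d : ℕ) :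
    Nballs Y (f + d) = Nballs Y' (f' + d) := by
  simp only [nballs_eq_tsum_nat, add_assoc, ← Nat.cast_add, h]

theorem nballs_phi (a : ℕ) (X : Config) (k : ℤ) :
    Nballs (Phi a X) k = Nballs X k + if k ≤ Bpos X a then 1 else 0 := by
  simp only [nballs_eq_tsum_nat, Phi]
  rw [Summable.tsum_add (ENat.summable _) (ENat.summable _)]
  congr 1
  split_ifs with hk
  · exact (tsum_congr fun n => if_congr (by omega) rfl rfl).trans
      (tsum_ite_eq (Bpos X a - k).toNat fun _ => 1)
  · exact (tsum_congr fun n => if_neg (by omega)).trans tsum_zero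

end Nballs

section Bpos

variable {X : Config} {a : ℕ} {b : ℤ}

theorem bpos_eq_of_nballs (hb : Nballs X b < a) (hb' : a ≤ Nballs X (b - 1)) : Bpos X a = b := by
  refine IsLeast.csInf_eq ⟨hb, fun j (hj : Nballs X j < a) => ?_⟩
  by_contra! hjb
  exact (hb'.trans (nballs_antitone X (by omega : j ≤ b - 1))).not_gt hj

theorem nballs_bpos (hne : ∃ g, Nballs X g < a) (hbdd : ∃ l, a ≤ Nballs X l) :
    Nballs X (Bpos X a) < a ∧ a ≤ Nballs X (Bpos X a - 1) := by
  obtain ⟨l, hl⟩ := hbdd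
  have hlower : l ∈ lowerBounds {j | Nballs X j < a} := fun j (hj : Nballs X j < a) =>
    le_of_lt (by_contra fun hjl => (hl.trans (nballs_antitone X (not_lt.1 hjl))).not_gt hj)
  exact ⟨Int.csInf_mem hne ⟨l, hlower⟩,
    not_lt.1 (notMem_of_lt_csInf (s := {j | Nballs X j < a}) (sub_one_lt _) ⟨l, hlower⟩)⟩

end Bpos

def HasFront (Y : Config) (f : ℤ) : Prop :=
  Y (f - 1) ≠ 0 ∧ ∀ j, f ≤ j → Y j = 0

theorem IsAdmissible.exists_hasFront {X : Config} (hX : IsAdmissible X) : ∃ f, HasFront X f := by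
  obtain ⟨⟨m, hm⟩, -⟩ := hX
  exact ⟨m + 1, (hm _).2 (by omega), fun j hj => not_not.1 fun hj' => by have := (hm j).1 hj'; omega⟩

theorem HasFront.phi {Y : Config} {f : ℤ} (h : HasFront Y f) (a : ℕ) :
    HasFront (Phi a Y) (max f (Bpos Y a + 1)) := by
  refine ⟨?_, fun j hj => ?_⟩
  · rcases max_cases f (Bpos Y a + 1) with ⟨hmax, -⟩ | ⟨hmax, -⟩ <;> rw [hmax] <;> simp [Phi, h.1]
  · simp [Phi, h.2 j (le_of_max_le_left hj), show j ≠ Bpos Y a by omega]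

theorem HasFront.exists_applyWord {Y : Config} {f : ℤ} (h : HasFront Y f) (w : List ℕ) :
    ∃ f', HasFront (applyWord Y w) f' := by
  induction w generalizing Y f with
  | nil => exact ⟨f, h⟩
  | cons a w ih => exact ih (h.phi a)

section inP

variable {X : Config} {a : ℕ} {t : List ℕ}

theorem not_inP_nil (X : Config) : ¬ inP X [] := by
  rintro ⟨β, b, hβ, -⟩
  simp at hβ

theorem inP_singleton : inP X [a] ↔ X (Bpos X a) = 0 := by
  refine ⟨fun ⟨β, b, hβ, hz⟩ => ?_, fun hz => ⟨[], a, rfl, hz⟩⟩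
  cases β with
  | nil => cases hβ; exact hz
  | cons c β => simp at hβ

theorem inP_cons (ht : t ≠ []) : inP X (a :: t) ↔ inP (Phi a X) t := by
  refine ⟨fun ⟨β, b, hβ, hz⟩ => ?_, fun ⟨β, b, hβ, hz⟩ => ⟨a :: β, b, by rw [hβ]; rfl, hz⟩⟩
  cases β with
  | nil => simp_all
  | cons c β =>
    obtain ⟨rfl, rfl⟩ := List.cons_eq_cons.1 hβ
    exact ⟨β, b, rfl, hz⟩

theorem inP_append (l : List ℕ) (ht : t ≠ []) : inP X (l ++ t) ↔ inP (applyWord X l) t := by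
  induction l generalizing X with
  | nil => rfl
  | cons a l ih => exact (inP_cons (by simp [ht])).trans ih

end inP

/-- The `c + 1` balls counted from just below each front keep every move of type at most `c + 1`
at or above the front. -/
structure Coupled (c : ℕ) (Y Y' : Config) (f f' : ℤ) : Prop where
  agree : ∀ n : ℕ, Y (f + n) = Y' (f' + n)
  le_nballs : (c : ℕ∞) + 1 ≤ Nballs Y (f - 1)
  le_nballs' : (c : ℕ∞) + 1 ≤ Nballs Y' (f' - 1)
  eventually_empty : ∀ᶠ j in atTop, Y j = 0

namespace Coupled

variable {c : ℕ} {Y Y' : Config} {f f' : ℤ} {a : ℕ}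

theorem of_hasFront (h : HasFront Y f) (h' : HasFront Y' f') : Coupled 0 Y Y' f f' where
  agree n := by rw [h.2 _ (by omega), h'.2 _ (by omega)]
  le_nballs := by
    rw [nballs_eq_add, sub_add_cancel, Nat.cast_zero, zero_add]
    exact (Order.one_le_iff_ne_zero.2 h.1).trans le_self_add
  le_nballs' := by
    rw [nballs_eq_add, sub_add_cancel, Nat.cast_zero, zero_add]
    exact (Order.one_le_iff_ne_zero.2 h'.1).trans le_self_add
  eventually_empty := eventually_atTop.2 ⟨f, h.2⟩

theorem exists_bpos_eq (hC : Coupled c Y Y' f f') (ha : 1 ≤ a) (hac : a ≤ c + 1) :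
    ∃ d : ℕ, Bpos Y a = f + d ∧ Bpos Y' a = f' + d := by
  have hcast : (a : ℕ∞) ≤ c + 1 := by exact_mod_cast hac
  obtain ⟨g, hg⟩ := eventually_atTop.1 hC.eventually_empty
  obtain ⟨hlt, hle⟩ := nballs_bpos (X := Y) (a := a)
    ⟨g, by rw [nballs_eq_zero hg]; exact_mod_cast ha⟩ ⟨f - 1, hcast.trans hC.le_nballs⟩
  obtain ⟨d, hd⟩ : ∃ d : ℕ, Bpos Y a = f + d := by
    refine ⟨(Bpos Y a - f).toNat, ?_⟩
    by_contra! hfb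
    exact (hcast.trans (hC.le_nballs.trans (nballs_antitone Y (by omega)))).not_gt hlt
  refine ⟨d, hd, bpos_eq_of_nballs ?_ ?_⟩
  · rwa [← nballs_add_nat_congr hC.agree, ← hd]
  · cases d with
    | zero => simpa using hcast.trans hC.le_nballs'
    | succ d =>
      rw [Nat.cast_succ, ← add_assoc, add_sub_cancel_right, ← nballs_add_nat_congr hC.agree]
      rwa [hd, Nat.cast_succ, ← add_assoc, add_sub_cancel_right] at hle

theorem apply_bpos_eq (hC : Coupled c Y Y' f f') (ha : 1 ≤ a) (hac : a ≤ c + 1) :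
    Y (Bpos Y a) = Y' (Bpos Y' a) := by
  obtain ⟨d, hd, hd'⟩ := hC.exists_bpos_eq ha hac
  rw [hd, hd', hC.agree]

theorem phi (hC : Coupled c Y Y' f f') (ha : 1 ≤ a) (hac : a ≤ c + 1) :
    Coupled (c + 1) (Phi a Y) (Phi a Y') f f' := by
  obtain ⟨d, hd, hd'⟩ := hC.exists_bpos_eq ha hac
  refine ⟨fun n => ?_, ?_, ?_, ?_⟩
  · simp only [Phi, hd, hd', hC.agree, add_right_inj, Nat.cast_inj]
  · rw [nballs_phi, if_pos (by omega), Nat.cast_succ]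
    exact add_le_add hC.le_nballs le_rfl
  · rw [nballs_phi, if_pos (by omega), Nat.cast_succ]
    exact add_le_add hC.le_nballs' le_rfl
  · filter_upwards [hC.eventually_empty, eventually_ne_atTop (Bpos Y a)] with j hj hjB
    simp [Phi, hj, hjB]

theorem inP_iff (hC : Coupled c Y Y' f f') {t : List ℕ} (ht : ∀ a ∈ t, 1 ≤ a)
    (hrenov : ∀ i (hi : i < t.length), t[i] ≤ c + i + 1) : inP Y t ↔ inP Y' t := by
  induction t generalizing c Y Y' with
  | nil => exact iff_of_false (not_inP_nil Y) (not_inP_nil Y')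
  | cons a t ih =>
    have ha : 1 ≤ a := ht a List.mem_cons_self
    have hac : a ≤ c + 1 := hrenov 0 (by simp)
    rcases eq_or_ne t [] with rfl | hne
    · rw [inP_singleton, inP_singleton, hC.apply_bpos_eq ha hac]
    · rw [inP_cons hne, inP_cons hne]
      refine ih (hC.phi ha hac) (fun b hb => ht b (List.mem_cons_of_mem a hb)) fun i hi => ?_
      have := hrenov (i + 1) (by simpa using hi)
      rw [List.getElem_cons_succ] at this
      omega

end Coupled

theorem exists_suffix_forall_sum_take_lt (s : List ℕ) (hs : s.sum < 2 * s.length) :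
    ∃ q t, s = q ++ t ∧ t ≠ [] ∧ ∀ k, 0 < k → k ≤ t.length → (t.take k).sum < 2 * k := by
  by_cases hrec : ∀ k, 0 < k → k ≤ s.length → (s.take k).sum < 2 * k
  · exact ⟨[], s, rfl, by rintro rfl; simp at hs, hrec⟩
  push Not at hrec
  obtain ⟨k, hk0, hks, hk⟩ := hrec
  have hsum := List.sum_take_add_sum_drop s k
  obtain ⟨q, t, hq, ht, htk⟩ := exists_suffix_forall_sum_take_lt (s.drop k) (by simp; omega)
  exact ⟨s.take k ++ q, t, by rw [List.append_assoc, ← hq, List.take_append_drop], ht, htk⟩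
termination_by s.length
decreasing_by simp; omega

theorem getElem_le_of_forall_sum_take_lt {t : List ℕ} (ht : ∀ a ∈ t, 1 ≤ a)
    (hsum : ∀ k, 0 < k → k ≤ t.length → (t.take k).sum < 2 * k) (i : ℕ) (hi : i < t.length) :
    t[i] ≤ i + 1 := by
  have hlt := hsum (i + 1) i.succ_pos hi
  have hle := List.length_le_sum_of_one_le (t.take i) fun a ha => ht a (List.mem_of_mem_take ha)
  rw [List.sum_take_succ _ _ hi] at hlt
  rw [List.length_take, min_eq_left hi.le] at hle
  omega

/-- For any admissible configuration X and word α with L(α) > H(α) + 1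
(equivalently Σ α_i + 1 < 2 L(α), where H(α) = Σ α_i − L(α)), ε_X(α) = 0. -/
theorem eps_eq_zero_of_length_gt_height (X : Config) (hX : IsAdmissible X)
    (α : List ℕ) (hα : ∀ a ∈ α, 1 ≤ a) (h : α.sum + 1 < 2 * α.length) :
    eps X α = 0 := by
  obtain ⟨a, s, rfl⟩ := α.exists_cons_of_ne_nil (by rintro rfl; simp at h)
  have hs : s.sum < 2 * s.length := by
    have := hα a List.mem_cons_self
    simp only [List.sum_cons, List.length_cons] at h
    omega
  obtain ⟨q, t, rfl, ht, hsum⟩ := exists_suffix_forall_sum_take_lt s hs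
  have ht₁ : ∀ b ∈ t, 1 ≤ b := fun b hb => hα b (by simp [hb])
  obtain ⟨f₀, h₀⟩ := hX.exists_hasFront
  obtain ⟨f, hf⟩ := h₀.exists_applyWord (a :: q)
  obtain ⟨f', hf'⟩ := h₀.exists_applyWord q
  have hiff : inP X (a :: q ++ t) ↔ inP X (q ++ t) := by
    rw [inP_append (a :: q) ht, inP_append q ht]
    refine (Coupled.of_hasFront hf hf').inP_iff ht₁ fun i hi => ?_
    simpa using getElem_le_of_forall_sum_take_lt ht₁ hsum i hi
  rw [eps, List.tail_cons, ← List.cons_append, if_congr hiff rfl rfl, sub_self]
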